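/- Let M be a one-way DPPDA satisfying the normal-form properties and let G_M be the PEG constructed from M. Then for all states q, p, every stack symbol Z, and every word u ∈ Σ*: (1) either R([qZp↑], u) = u or R([qZp↑], u) = F; and (2) R([qZp↑], u) = u if and only if R([qZp̄], u) ≠ F. -/
import Mathlib


/-! ### Parsing expression grammars -/

/-- Parsing expressions over nonterminals `N` and input alphabet `A`:
`ε`, terminals, nonterminals, sequence, prioritized choice, not-predicate. -/
inductive PExp (N A : Type) : Type where
  | eps : PExp N A
  | term : A → PExp N A
  | nt : N → PExp N A
  | seq : PExp N A → PExp N A → PExp N A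
  | choice : PExp N A → PExp N A → PExp N A
  | not : PExp N A → PExp N A

/-- A parsing expression grammar: one rule per nonterminal, and an axiom. -/
structure PEG (N A : Type) : Type where
  rule : N → PExp N A
  start : N

/-- Big-step relational semantics of the PEG parsing function `R`:
`Parses G e w r` means `R(e, w) = r`, where `r = none` encodes the failure `F`
and `r = some s` means that `e` consumed a prefix of `w` leaving the suffix `s`.
`R(e, w)` is defined iff `∃ r, Parses G e w r`. -/
inductive Parses {N A : Type} (G : PEG N A) : PExp N A → List A → Option (List A) → Prop where
  | eps (w : List A) : Parses G .eps w (some w)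
  | term_ok (a : A) (s : List A) : Parses G (.term a) (a :: s) (some s)
  | term_mismatch {a b : A} (s : List A) (h : a ≠ b) : Parses G (.term a) (b :: s) none
  | term_nil (a : A) : Parses G (.term a) [] none
  | nt {B : N} {w : List A} {r : Option (List A)} :
      Parses G (G.rule B) w r → Parses G (.nt B) w r
  | seq_ok {e₁ e₂ : PExp N A} {w w' : List A} {r : Option (List A)} :
      Parses G e₁ w (some w') → Parses G e₂ w' r → Parses G (.seq e₁ e₂) w r
  | seq_fail {e₁ e₂ : PExp N A} {w : List A} :
      Parses G e₁ w none → Parses G (.seq e₁ e₂) w none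
  | choice_fst {e₁ e₂ : PExp N A} {w w' : List A} :
      Parses G e₁ w (some w') → Parses G (.choice e₁ e₂) w (some w')
  | choice_snd {e₁ e₂ : PExp N A} {w : List A} {r : Option (List A)} :
      Parses G e₁ w none → Parses G e₂ w r → Parses G (.choice e₁ e₂) w r
  | not_succ {e : PExp N A} {w : List A} :
      Parses G e w none → Parses G (.not e) w (some w)
  | not_fail {e : PExp N A} {w w' : List A} :
      Parses G e w (some w') → Parses G (.not e) w none

/-- The language generated by a PEG: `L(G) = {w | R(S, w) = ε}`. -/
def PEG.Lang {N A : Type} (G : PEG N A) : Set (List A) :=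
  {w | Parses G (.nt G.start) w (some [])}

/-- A PEG is complete if `R(S, w)` is defined for every input `w`. -/
def PEG.Complete {N A : Type} (G : PEG N A) : Prop :=
  ∀ w : List A, ∃ r, Parses G (.nt G.start) w r

/-! ### Deterministic pointer pushdown automata -/

/-- Tape symbols: the input letters plus the end markers `▷` and `◁`. -/
inductive TSym (A : Type) : Type where
  | lmark : TSym A
  | rmark : TSym A
  | sym : A → TSym A

/-- The symbol in cell `j` of the tape `▷w◁` (cell `0` holds `▷`, cell `|w|+1` holds `◁`). -/
def tapeNth {A : Type} (w : List A) (j : ℕ) : TSym A :=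
  if j = 0 then .lmark
  else
    match w[j - 1]? with
    | some a => .sym a
    | none => .rmark

/-- Head directions: move left, stay, return to the stored pointer, move right. -/
inductive Dir : Type where
  | left | down | up | right
deriving DecidableEq

/-- A (two-way) deterministic pointer pushdown automaton.  A transition
`trans q a Z = some (p, β, d)` pops `(Z, i)` when `β = []` (moving the head by `d`,
where `d = up` returns the head to the position `i` stored with `Z`), and pushes `β`
above `Z` when `β ≠ []` (moving the head by `d`).  Moves `↑` must pop (`α = ε`),
moving left off `▷` and right off `◁` is forbidden. -/
structure DPPDA (Q A Γ : Type) : Type where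
  trans : Q → TSym A → Γ → Option (Q × List Γ × Dir)
  init : Q
  Z0 : Γ
  final : Q → Bool
  up_pop : ∀ q a Z p β, trans q a Z = some (p, β, Dir.up) → β = []
  no_left_lmark : ∀ q Z p β, trans q TSym.lmark Z ≠ some (p, β, Dir.left)
  no_right_rmark : ∀ q Z p β, trans q TSym.rmark Z ≠ some (p, β, Dir.right)

/-- A configuration: state, stack of symbols tagged with the head position at which
they were pushed (top of the stack is the head of the list), and head position. -/
structure Conf (Q Γ : Type) : Type where
  state : Q
  stack : List (Γ × ℕ)
  pos : ℕ

/-- One move of a DPPDA on input `w` (`none` when no move is possible). -/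
def DPPDA.step {Q A Γ : Type} (M : DPPDA Q A Γ) (w : List A) (c : Conf Q Γ) :
    Option (Conf Q Γ) :=
  match c.stack with
  | [] => none
  | (Z, i) :: rest =>
    match M.trans c.state (tapeNth w c.pos) Z with
    | none => none
    | some (p, β, d) =>
      let j' : ℕ :=
        match d with
        | Dir.left => c.pos - 1
        | Dir.down => c.pos
        | Dir.up => i
        | Dir.right => c.pos + 1
      match β with
      | [] => some ⟨p, rest, j'⟩
      | X :: Xs => some ⟨p, ((X :: Xs).map fun Y => (Y, j')) ++ (Z, i) :: rest, j'⟩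

/-- Reachability between configurations. -/
def DPPDA.Reaches {Q A Γ : Type} (M : DPPDA Q A Γ) (w : List A) :
    Conf Q Γ → Conf Q Γ → Prop :=
  Relation.ReflTransGen (fun c c' => M.step w c = some c')

/-- Acceptance: from the initial configuration `(q₀, (Z₀, 0), 0)` the automaton
reaches the right end marker with empty stack in a final state. -/
def DPPDA.Accepts {Q A Γ : Type} (M : DPPDA Q A Γ) (w : List A) : Prop :=
  ∃ qf : Q, M.final qf = true ∧
    M.Reaches w ⟨M.init, [(M.Z0, 0)], 0⟩ ⟨qf, [], w.length + 1⟩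

/-- A one-way DPPDA: moves with direction `←` are forbidden. -/
def DPPDA.OneWay {Q A Γ : Type} (M : DPPDA Q A Γ) : Prop :=
  ∀ q a Z p β, M.trans q a Z ≠ some (p, β, Dir.left)

/-- The normal-form properties of a one-way DPPDA used in the DPPDA-to-PEG
construction: pops only use `↓`/`↑`, pushes push exactly one symbol, `Z₀` is never
pushed (so it occurs only at the bottom of the stack), and pops of `Z₀` (in
particular the final pop) have direction `↓`. -/
def DPPDA.NormalForm {Q A Γ : Type} (M : DPPDA Q A Γ) : Prop :=
  M.OneWay ∧
  (∀ q a Z p d, M.trans q a Z = some (p, ([] : List Γ), d) →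
    d = Dir.down ∨ d = Dir.up) ∧
  (∀ q a Z p β d, M.trans q a Z = some (p, β, d) → β.length ≤ 1) ∧
  (∀ q a Z p β d, M.trans q a Z = some (p, β, d) → M.Z0 ∉ β) ∧
  (∀ q a p d, M.trans q a M.Z0 = some (p, ([] : List Γ), d) → d = Dir.down)

/-! ### The PEG constructed from a one-way DPPDA in normal form -/

/-- Tags of the constructed nonterminals: `[qZp↓]`, `[qZp↑]`, `[qZp↕]`, `[qZp̄]`. -/
inductive PTag : Type where
  | dn | up | ud | bar
deriving DecidableEq

/-- Nonterminals of the constructed PEG: the axiom `none`, and `some (q, Z, p, t)`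
standing for `[qZp t]`. -/
abbrev NTof (Q Γ : Type) : Type := Option (Q × Γ × Q × PTag)

/-- The failure expression `F = !ε`. -/
def failE {N A : Type} : PExp N A := .not .eps

/-- Prioritized choice of a list of alternatives (empty choice is failure). -/
def choiceE {N A : Type} (l : List (PExp N A)) : PExp N A := l.foldr PExp.choice failE

/-- The any-character expression `• = a₁ / ⋯ / a_k`. -/
noncomputable def anyE {N A : Type} [Fintype A] : PExp N A :=
  choiceE (((Finset.univ : Finset A).toList).map PExp.term)

/-- The end-of-input expression `!•`. -/
noncomputable def endE {N A : Type} [Fintype A] : PExp N A := .not anyE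

/-- The expression consuming the tape symbol `a` (only input letters can be consumed). -/
def consumeE {N A : Type} : TSym A → PExp N A
  | .sym c => .term c
  | _ => failE

/-- The and-predicate `&a` testing for the tape symbol `a` without consuming it
(`◁` corresponds to the end of the remaining input). -/
noncomputable def testE {N A : Type} [Fintype A] : TSym A → PExp N A
  | .sym c => .not (.not (.term c))
  | .rmark => endE
  | .lmark => failE

/-- The right-hand-side alternative for the nonterminal `[qZp t]` contributed by the
tape symbol `a`, determined by the transition `δ(q, a, Z)` as in the construction. -/
noncomputable def altOf {Q A Γ : Type} [Fintype Q] [DecidableEq Q] [Fintype A]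
    (M : DPPDA Q A Γ) (q : Q) (Z : Γ) (p : Q) (t : PTag) (a : TSym A) :
    PExp (NTof Q Γ) A :=
  match M.trans q a Z with
  | none => failE
  | some (r, β, d) =>
    match β, d, t with
    -- push with `→` : `a [rXs↕][sZp·]` (with `&(⋯)` for the `↑`-version)
    | [X], Dir.right, PTag.dn =>
        choiceE (((Finset.univ : Finset Q).toList).map fun s =>
          PExp.seq (consumeE a)
            (PExp.seq (PExp.nt (some (r, X, s, PTag.ud)))
              (PExp.nt (some (s, Z, p, PTag.dn)))))
    | [X], Dir.right, PTag.bar =>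
        choiceE (((Finset.univ : Finset Q).toList).map fun s =>
          PExp.seq (consumeE a)
            (PExp.seq (PExp.nt (some (r, X, s, PTag.ud)))
              (PExp.nt (some (s, Z, p, PTag.bar)))))
    | [X], Dir.right, PTag.up =>
        choiceE (((Finset.univ : Finset Q).toList).map fun s =>
          PExp.not (PExp.not (PExp.seq (consumeE a)
            (PExp.seq (PExp.nt (some (r, X, s, PTag.ud)))
              (PExp.nt (some (s, Z, p, PTag.bar)))))))
    -- push with `↓` : `(&a) [rXs↕][sZp·]` (with `&(⋯)` for the `↑`-version)
    | [X], Dir.down, PTag.dn =>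
        choiceE (((Finset.univ : Finset Q).toList).map fun s =>
          PExp.seq (testE a)
            (PExp.seq (PExp.nt (some (r, X, s, PTag.ud)))
              (PExp.nt (some (s, Z, p, PTag.dn)))))
    | [X], Dir.down, PTag.bar =>
        choiceE (((Finset.univ : Finset Q).toList).map fun s =>
          PExp.seq (testE a)
            (PExp.seq (PExp.nt (some (r, X, s, PTag.ud)))
              (PExp.nt (some (s, Z, p, PTag.bar)))))
    | [X], Dir.down, PTag.up =>
        choiceE (((Finset.univ : Finset Q).toList).map fun s =>
          PExp.seq (testE a)
            (PExp.not (PExp.not (PExp.seq (PExp.nt (some (r, X, s, PTag.ud)))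
              (PExp.nt (some (s, Z, p, PTag.bar)))))))
    -- pop with `↑`
    | [], Dir.up, PTag.dn => failE
    | [], Dir.up, PTag.bar => if r = p then testE a else failE
    | [], Dir.up, PTag.up => if r = p then testE a else failE
    -- pop with `↓`
    | [], Dir.down, PTag.dn => if r = p then testE a else failE
    | [], Dir.down, PTag.bar => failE
    | [], Dir.down, PTag.up => failE
    -- cases excluded by the normal form
    | _, _, _ => failE

/-- The rules of the constructed PEG: `S ← [q₀Z₀q_f¹↓] / ⋯ / [q₀Z₀q_f^m↓]` over all
final states, `[qZp↕] ← [qZp↓] / [qZp↑]`, and for the remaining nonterminals the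
prioritized choice over all tape symbols `a` of the alternatives `altOf`. -/
noncomputable def ruleOf {Q A Γ : Type} [Fintype Q] [DecidableEq Q] [Fintype A]
    (M : DPPDA Q A Γ) : NTof Q Γ → PExp (NTof Q Γ) A
  | none =>
      choiceE (((((Finset.univ : Finset Q).toList).filter fun qf => M.final qf)).map
        fun qf => PExp.nt (some (M.init, M.Z0, qf, PTag.dn)))
  | some (q, Z, p, PTag.ud) =>
      PExp.choice (PExp.nt (some (q, Z, p, PTag.dn))) (PExp.nt (some (q, Z, p, PTag.up)))
  | some (q, Z, p, t) =>
      choiceE ((TSym.rmark :: (((Finset.univ : Finset A).toList).map TSym.sym)).map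
        (altOf M q Z p t))

/-- The PEG `G_M` constructed from a one-way DPPDA `M` in normal form. -/
noncomputable def PEGof {Q A Γ : Type} [Fintype Q] [DecidableEq Q] [Fintype A]
    (M : DPPDA Q A Γ) : PEG (NTof Q Γ) A :=
  ⟨ruleOf M, none⟩

section Aux

variable {N A : Type} (G : PEG N A)

/-- The key invariant relating the `↑`-expression `e1` and the `¯`-expression `e2`
on input `u`. -/
def Good (u : List A) (e1 e2 : PExp N A) : Prop :=
  (∀ r, Parses G e1 u r → r = some u ∨ r = none) ∧
  (Parses G e1 u (some u) ↔ ∃ s, Parses G e2 u (some s)) ∧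
  (Parses G e1 u none ↔ Parses G e2 u none)

lemma fail_none (u : List A) : Parses G failE u none :=
  Parses.not_fail (Parses.eps u)

lemma fail_shape {u : List A} {r} (h : Parses G failE u r) : r = none := by
  cases h with
  | not_succ h' => cases h'
  | not_fail h' => rfl

lemma good_fail (u : List A) : Good G u failE failE := by
  refine ⟨fun r h => Or.inr (fail_shape G h), ?_, Iff.rfl⟩
  constructor
  · intro h; exact absurd (fail_shape G h) (by simp)
  · rintro ⟨s, hs⟩; exact absurd (fail_shape G hs) (by simp)

lemma not_shape {e : PExp N A} {u : List A} {r} (h : Parses G (.not e) u r) :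
    r = some u ∨ r = none := by
  cases h with
  | not_succ h' => exact Or.inl rfl
  | not_fail h' => exact Or.inr rfl

lemma testE_shape [Fintype A] {a : TSym A} {u : List A} {r}
    (h : Parses G (testE a) u r) : r = some u ∨ r = none := by
  cases a <;> exact not_shape G h

lemma good_self {u : List A} {e : PExp N A}
    (hs : ∀ r, Parses G e u r → r = some u ∨ r = none) : Good G u e e := by
  refine ⟨hs, ?_, Iff.rfl⟩
  constructor
  · intro h; exact ⟨u, h⟩
  · rintro ⟨s, h'⟩
    rcases hs _ h' with h | h
    · cases h; exact h'
    · cases h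

lemma good_notnot {u : List A} (e : PExp N A) : Good G u (.not (.not e)) e := by
  refine ⟨fun r h => not_shape G h, ?_, ?_⟩
  · constructor
    · intro h
      cases h with
      | not_succ h' =>
        cases h' with
        | not_fail h'' => exact ⟨_, h''⟩
    · rintro ⟨s, hs⟩
      exact Parses.not_succ (Parses.not_fail hs)
  · constructor
    · intro h
      cases h with
      | not_fail h' =>
        cases h' with
        | not_succ h'' => exact h''
    · intro h
      exact Parses.not_fail (Parses.not_succ h)

lemma good_seq_test [Fintype A] {u : List A} (a : TSym A) (b : PExp N A) :
    Good G u (.seq (testE a) (.not (.not b))) (.seq (testE a) b) := by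
  refine ⟨?_, ?_, ?_⟩
  · intro r h
    cases h with
    | seq_ok h1 h2 =>
      rcases testE_shape G h1 with h | h
      · cases h; exact not_shape G h2
      · cases h
    | seq_fail h1 => exact Or.inr rfl
  · constructor
    · intro h
      cases h with
      | seq_ok h1 h2 =>
        rcases testE_shape G h1 with h | h
        · cases h
          rcases ((good_notnot G b).2.1).mp h2 with ⟨s, hs⟩
          exact ⟨s, Parses.seq_ok h1 hs⟩
        · cases h
    · rintro ⟨s, hs⟩
      cases hs with
      | seq_ok h1 h2 =>
        rcases testE_shape G h1 with h | h
        · cases h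
          exact Parses.seq_ok h1 (((good_notnot G b).2.1).mpr ⟨s, h2⟩)
        · cases h
  · constructor
    · intro h
      cases h with
      | seq_ok h1 h2 =>
        rcases testE_shape G h1 with h | h
        · cases h
          exact Parses.seq_ok h1 (((good_notnot G b).2.2).mp h2)
        · cases h
      | seq_fail h1 => exact Parses.seq_fail h1
    · intro h
      cases h with
      | seq_ok h1 h2 =>
        rcases testE_shape G h1 with h | h
        · cases h
          exact Parses.seq_ok h1 (((good_notnot G b).2.2).mpr h2)
        · cases h
      | seq_fail h1 => exact Parses.seq_fail h1

lemma good_choice {u : List A} {e1 e2 f1 f2 : PExp N A}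
    (he : Good G u e1 e2) (hf : Good G u f1 f2) :
    Good G u (.choice e1 f1) (.choice e2 f2) := by
  obtain ⟨he1, he2, he3⟩ := he
  obtain ⟨hf1, hf2, hf3⟩ := hf
  refine ⟨?_, ?_, ?_⟩
  · intro r h
    cases h with
    | choice_fst h' => exact he1 _ h'
    | choice_snd h1 h2 => exact hf1 _ h2
  · constructor
    · intro h
      cases h with
      | choice_fst h' =>
        rcases he2.mp h' with ⟨s, hs⟩
        exact ⟨s, Parses.choice_fst hs⟩
      | choice_snd h1 h2 =>
        rcases hf2.mp h2 with ⟨s, hs⟩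
        exact ⟨s, Parses.choice_snd (he3.mp h1) hs⟩
    · rintro ⟨s, hs⟩
      cases hs with
      | choice_fst h' => exact Parses.choice_fst (he2.mpr ⟨_, h'⟩)
      | choice_snd h1 h2 =>
        exact Parses.choice_snd (he3.mpr h1) (hf2.mpr ⟨_, h2⟩)
  · constructor
    · intro h
      cases h with
      | choice_snd h1 h2 =>
        exact Parses.choice_snd (he3.mp h1) (hf3.mp h2)
    · intro h
      cases h with
      | choice_snd h1 h2 =>
        exact Parses.choice_snd (he3.mpr h1) (hf3.mpr h2)

lemma good_choiceE_map {ι : Type*} {u : List A} (f1 f2 : ι → PExp N A)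
    (l : List ι) (h : ∀ i ∈ l, Good G u (f1 i) (f2 i)) :
    Good G u (choiceE (l.map f1)) (choiceE (l.map f2)) := by
  induction l with
  | nil => exact good_fail G u
  | cons a l ih =>
    exact good_choice G (h a (by simp)) (ih fun i hi => h i (by simp [hi]))

lemma good_ite [Fintype A] {u : List A} {c : Prop} [Decidable c] (a : TSym A) :
    Good G u (if c then testE a else failE) (if c then testE a else failE) := by
  split
  · exact good_self G (fun r h => testE_shape G h)
  · exact good_fail G u

end Aux

lemma good_alt {Q A Γ : Type} [Fintype Q] [DecidableEq Q] [Fintype A]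
    (M : DPPDA Q A Γ) (q Z p) (a : TSym A) (u : List A) :
    Good (PEGof M) u (altOf M q Z p PTag.up a) (altOf M q Z p PTag.bar a) := by
  unfold altOf
  set G := PEGof M
  cases h : M.trans q a Z with
  | none => exact good_fail G u
  | some x =>
    obtain ⟨r, β, d⟩ := x
    match β, d with
    | [], Dir.left => exact good_fail G u
    | [], Dir.right => exact good_fail G u
    | [], Dir.down => exact good_fail G u
    | [], Dir.up => exact good_ite G a
    | [X], Dir.left => exact good_fail G u
    | [X], Dir.up => exact good_fail G u
    | [X], Dir.right =>
      exact good_choiceE_map G _ _ _ (fun s _ => good_notnot G _)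
    | [X], Dir.down =>
      exact good_choiceE_map G _ _ _ (fun s _ => good_seq_test G a _)
    | X :: Y :: t, _ => exact good_fail G u

/-- For a one-way DPPDA `M` in normal form and its constructed PEG
`G_M`: for all states `q, p`, every stack symbol `Z` and every word `u`,
(1) `R([qZp↑], u)` is either `u` or `F`; and
(2) `R([qZp↑], u) = u` iff `R([qZp̄], u) ≠ F`. -/

theorem pegOf_up_nonterminal {Q A Γ : Type} [Fintype Q] [DecidableEq Q] [Fintype A]
    (M : DPPDA Q A Γ) (hM : M.NormalForm) (q p : Q) (Z : Γ) (u : List A) :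
    (∀ r, Parses (PEGof M) (.nt (some (q, Z, p, PTag.up))) u r →
      r = some u ∨ r = none) ∧
    (Parses (PEGof M) (.nt (some (q, Z, p, PTag.up))) u (some u) ↔
      ∃ s, Parses (PEGof M) (.nt (some (q, Z, p, PTag.bar))) u (some s)) := by
  have hG : Good (PEGof M) u (ruleOf M (some (q, Z, p, PTag.up)))
      (ruleOf M (some (q, Z, p, PTag.bar))) :=
    good_choiceE_map (PEGof M) _ _ _ (fun a _ => good_alt M q Z p a u)
  constructor
  · intro r h
    cases h with
    | nt h' => exact hG.1 r h'
  · constructor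
    · intro h
      cases h with
      | nt h' =>
        rcases hG.2.1.mp h' with ⟨s, hs⟩
        exact ⟨s, Parses.nt hs⟩
    · rintro ⟨s, h⟩
      cases h with
      | nt h' => exact Parses.nt (hG.2.1.mpr ⟨s, h'⟩)
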